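/- arXiv:2503.12011 — 9 statements merged into one kernel-verified Lean document; each statement's English description precedes it below -/
import Mathlib

section
/- Let D be a negative integer and let A, B be invertible 2×2 rational matrices, with A = [[a,b],[c,d]] and B = [[α,β],[γ,δ]]. Suppose τ ∈ ℚ(√D) \ ℚ satisfies both τ(a + bτ) = c + dτ and τ(α + βτ) = γ + δτ (i.e. τ is a common fixed point of the associated fractional-linear actions). If A and B have a common eigenvalue, then B = A or B = (det A)·A⁻¹. -/
open Matrix

lemma aux_inv2 (a b c d : ℚ) (h : a*d - b*c ≠ 0) :
    (!![a,b;c,d]).det • (!![a,b;c,d])⁻¹ = !![d,-b;-c,a] := by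
  have hdet : (!![a,b;c,d]).det = a*d - b*c := by simp [Matrix.det_fin_two_of]
  rw [Matrix.inv_def, Matrix.adjugate_fin_two_of, smul_smul, hdet,
    Ring.inverse_eq_inv, mul_inv_cancel₀ h, one_smul]

/-- If `τ ∈ ℚ(√D) \ ℚ` (D a negative integer) is a common fixed point of the
fractional-linear actions of two invertible rational 2×2 matrices `A`, `B`
(expressed via `τ(a+bτ) = c+dτ` and `τ(α+βτ) = γ+δτ`), and `A`, `B` have a
common eigenvalue, then `B = A` or `B = (det A) • A⁻¹`. -/
theorem stmt_0 (D : ℤ) (hD : D < 0) (a b c d α β γ δ : ℚ)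
    (hA : a * d - b * c ≠ 0) (hB : α * δ - β * γ ≠ 0)
    (τ : ℂ)
    (hτ : ∃ x y : ℚ, y ≠ 0 ∧ τ = (x : ℂ) + (y : ℂ) * (Real.sqrt (-(D : ℝ)) * Complex.I))
    (hfixA : τ * ((a : ℂ) + (b : ℂ) * τ) = (c : ℂ) + (d : ℂ) * τ)
    (hfixB : τ * ((α : ℂ) + (β : ℂ) * τ) = (γ : ℂ) + (δ : ℂ) * τ)
    (hcommon : ∃ μ : ℂ, μ ^ 2 - ((a : ℂ) + (d : ℂ)) * μ + ((a : ℂ) * d - (b : ℂ) * c) = 0 ∧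
      μ ^ 2 - ((α : ℂ) + (δ : ℂ)) * μ + ((α : ℂ) * δ - (β : ℂ) * γ) = 0) :
    !![α, β; γ, δ] = !![a, b; c, d] ∨
      !![α, β; γ, δ] = (!![a, b; c, d]).det • (!![a, b; c, d])⁻¹ := by
  obtain ⟨x, y, hy, hτeq⟩ := hτ
  have hr : Real.sqrt (-(D : ℝ)) ≠ 0 := by
    have : (0:ℝ) < -(D:ℝ) := by
      have : (D:ℝ) < 0 := by exact_mod_cast hD
      linarith
    positivity
  have key : ∀ p q : ℚ, (p : ℂ) + (q : ℂ) * τ = 0 → p = 0 ∧ q = 0 := by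
    intro p q h
    rw [hτeq] at h
    have him := congrArg Complex.im h
    have hre := congrArg Complex.re h
    simp [Complex.ext_iff, Complex.add_im, Complex.mul_im, Complex.mul_re] at him hre
    have hq0 : q = 0 := by
      rcases him with h1 | h2 | h3
      · exact h1
      · exact absurd h2 hy
      · exact absurd h3 hr
    subst hq0
    simp at hre
    exact ⟨hre, rfl⟩
  obtain ⟨μ, h1, h2⟩ := hcommon
  have f1 : (μ - ((a:ℂ) + b * τ)) * (μ - ((d:ℂ) - b * τ)) = 0 := by
    linear_combination h1 - (b:ℂ) * hfixA
  have f2 : (μ - ((α:ℂ) + β * τ)) * (μ - ((δ:ℂ) - β * τ)) = 0 := by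
    linear_combination h2 - (β:ℂ) * hfixB
  rcases mul_eq_zero.1 f1 with e1 | e1 <;> rcases mul_eq_zero.1 f2 with e2 | e2
  · -- μ = a+bτ = α+βτ
    obtain ⟨hp, hq⟩ := key (a - α) (b - β) (by push_cast; linear_combination e2 - e1)
    have haC : (a:ℂ) = α := by exact_mod_cast (by linarith [sub_eq_zero.1 hp] : a = α)
    have hbC : (b:ℂ) = β := by exact_mod_cast (by linarith [sub_eq_zero.1 hq] : b = β)
    obtain ⟨hp2, hq2⟩ := key (γ - c) (δ - d)
      (by push_cast; linear_combination hfixA - hfixB - τ^2 * hbC - τ * haC)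
    left
    have hα : α = a := by linarith [sub_eq_zero.1 hp]
    have hβ : β = b := by linarith [sub_eq_zero.1 hq]
    have hγ : γ = c := by linarith [sub_eq_zero.1 hp2]
    have hδ : δ = d := by linarith [sub_eq_zero.1 hq2]
    rw [hα, hβ, hγ, hδ]
  · -- μ = a+bτ = δ-βτ
    obtain ⟨hp, hq⟩ := key (a - δ) (b + β) (by push_cast; linear_combination e2 - e1)
    have hδ : δ = a := by linarith [sub_eq_zero.1 hp]
    have hβ : β = -b := by
      have : b + β = 0 := hq; linarith
    have hδC : (δ:ℂ) = a := by exact_mod_cast hδ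
    have hβC : (β:ℂ) = -b := by exact_mod_cast hβ
    obtain ⟨hp2, hq2⟩ := key (-(γ + c)) (α - d)
      (by push_cast; linear_combination hfixA + hfixB - τ^2 * hβC + τ * hδC)
    have hα : α = d := by linarith [sub_eq_zero.1 hq2]
    have hγ : γ = -c := by
      have : γ + c = 0 := by linarith [neg_eq_zero.1 hp2]
      linarith
    right
    rw [aux_inv2 a b c d hA, hδ, hβ, hα, hγ]
  · -- μ = d-bτ = α+βτ
    obtain ⟨hp, hq⟩ := key (d - α) (-(b + β)) (by push_cast; linear_combination e2 - e1)
    have hα : α = d := by linarith [sub_eq_zero.1 hp]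
    have hβ : β = -b := by
      have : b + β = 0 := by linarith [neg_eq_zero.1 hq]
      linarith
    have hαC : (α:ℂ) = d := by exact_mod_cast hα
    have hβC : (β:ℂ) = -b := by exact_mod_cast hβ
    obtain ⟨hp2, hq2⟩ := key (-(γ + c)) (a - δ)
      (by push_cast; linear_combination hfixA + hfixB - τ^2 * hβC - τ * hαC)
    have hδ : δ = a := by linarith [sub_eq_zero.1 hq2]
    have hγ : γ = -c := by
      have : γ + c = 0 := by linarith [neg_eq_zero.1 hp2]
      linarith
    right
    rw [aux_inv2 a b c d hA, hδ, hβ, hα, hγ]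
  · -- μ = d-bτ = δ-βτ
    obtain ⟨hp, hq⟩ := key (d - δ) (β - b) (by push_cast; linear_combination e2 - e1)
    have hδ : δ = d := by linarith [sub_eq_zero.1 hp]
    have hβ : β = b := by linarith [sub_eq_zero.1 hq]
    have hδC : (δ:ℂ) = d := by exact_mod_cast hδ
    have hβC : (β:ℂ) = b := by exact_mod_cast hβ
    obtain ⟨hp2, hq2⟩ := key (γ - c) (a - α)
      (by push_cast; linear_combination hfixA - hfixB + τ^2 * hβC - τ * hδC)
    left
    have hα : α = a := by linarith [sub_eq_zero.1 hq2]
    have hγ : γ = c := by linarith [sub_eq_zero.1 hp2]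
    rw [hα, hβ, hγ, hδ]
end

section
/- Let λ be a root of unity of algebraic degree 4 over ℚ satisfying λ² − aλ − b = 0 with b = 1 and a an element of an imaginary quadratic field ℚ(√D) (D a negative integer). Then a ∈ {√(−1), −√(−1), √(−2), −√(−2)}. -/
/-!
Since `λ` lies on the unit circle, `a = λ - λ⁻¹` is purely imaginary, so `a ∈ ℚ(√D)` forces
`a² ∈ ℚ`. Then `a² + 2 = λ² + λ⁻²` is a rational algebraic integer of absolute value at most `2`,
i.e. an integer `m` with `|m| ≤ 2`, and `λ` is a root of `X⁴ - m X² + 1`. As `λ` has degree `4`,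
this quartic has no quadratic factor over `ℚ`, which leaves `m ∈ {0, 1}`, i.e. `a² ∈ {-2, -1}`.
-/

open Polynomial

theorem minpoly_natDegree_le_two_of_quadratic {K A : Type*} [Field K] [Ring A] [Algebra K A]
    {x : A} (c d : K) (h : x ^ 2 + algebraMap K A c * x + algebraMap K A d = 0) :
    (minpoly K x).natDegree ≤ 2 := by
  have hmonic : (X ^ 2 + C c * X + C d : K[X]).Monic := by monicity!
  have hdeg : (X ^ 2 + C c * X + C d : K[X]).natDegree = 2 := by compute_degree!
  rw [← hdeg]
  exact natDegree_le_natDegree (minpoly.min K x hmonic (by simpa [Algebra.smul_def] using h))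

theorem eq_zero_or_one_of_quartic_eq_zero {A : Type*} [CommRing A] [IsDomain A] [Algebra ℚ A]
    {x : A} (hx : 2 < (minpoly ℚ x).natDegree) {m : ℤ} (hm : |m| ≤ 2)
    (h : x ^ 4 - m * x ^ 2 + 1 = 0) : m = 0 ∨ m = 1 := by
  have no_quadratic_factor (c d : ℚ)
      (hcd : x ^ 2 + algebraMap ℚ A c * x + algebraMap ℚ A d = 0) :
      False := by
    have := minpoly_natDegree_le_two_of_quadratic c d hcd
    omega
  obtain ⟨hm₁, hm₂⟩ := abs_le.mp hm
  interval_cases m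
  · refine (no_quadratic_factor 0 1 ?_).elim
    have : (x ^ 2 + 1) ^ 2 = 0 := by linear_combination h
    simpa using pow_eq_zero_iff two_ne_zero |>.mp this
  · have : (x ^ 2 + x + 1) * (x ^ 2 - x + 1) = 0 := by linear_combination h
    rcases mul_eq_zero.mp this with h' | h'
    · exact (no_quadratic_factor 1 1 (by simpa using h')).elim
    · exact (no_quadratic_factor (-1) 1 (by simp; linear_combination h')).elim
  · simp
  · simp
  · refine (no_quadratic_factor 0 (-1) ?_).elim
    have : (x ^ 2 - 1) ^ 2 = 0 := by linear_combination h
    simpa [sub_eq_add_neg] using pow_eq_zero_iff two_ne_zero |>.mp this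

theorem isIntegral_of_pow_eq_one {R : Type*} [CommRing R] {z : R} {n : ℕ} (hn : 0 < n)
    (h : z ^ n = 1) : IsIntegral ℤ z :=
  (IsPrimitiveRoot.orderOf z).isIntegral
    (orderOf_pos_iff.mpr (isOfFinOrder_iff_pow_eq_one.mpr ⟨n, hn, h⟩))

theorem Rat.exists_int_eq_of_isIntegral {K : Type*} [Field K] [CharZero K] {q : ℚ}
    (h : IsIntegral ℤ (q : K)) : ∃ m : ℤ, q = m := by
  rw [← eq_ratCast (algebraMap ℚ K), isIntegral_algebraMap_iff (algebraMap ℚ K).injective,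
    IsIntegrallyClosed.isIntegral_iff] at h
  obtain ⟨m, hm⟩ := h
  exact ⟨m, by simpa using hm.symm⟩

theorem norm_add_inv_le_two {K : Type*} [NormedDivisionRing K] {z : K} (hz : ‖z‖ = 1) :
    ‖z + z⁻¹‖ ≤ 2 := by
  calc ‖z + z⁻¹‖ ≤ ‖z‖ + ‖z⁻¹‖ := norm_add_le _ _
    _ = 2 := by rw [norm_inv, hz]; norm_num

namespace Complex

theorem re_sub_inv_eq_zero {z : ℂ} (hz : ‖z‖ = 1) : (z - z⁻¹).re = 0 := by
  rw [inv_eq_conj hz]; simp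

theorem sq_eq_neg_im_sq {a : ℂ} (ha : a.re = 0) : a ^ 2 = -((a.im ^ 2 : ℝ) : ℂ) := by
  apply Complex.ext <;> simp [sq, ha]

theorem exists_rat_sq_eq_of_re_eq_zero {a : ℂ} (hre : a.re = 0) {D : ℤ}
    (ha : ∃ x y : ℚ, a = (x : ℂ) + (y : ℂ) * (Real.sqrt (-(D : ℝ)) * I)) :
    ∃ q : ℚ, a ^ 2 = q := by
  obtain ⟨x, y, hxy⟩ := ha
  have him_sq : a.im ^ 2 = (y ^ 2 * max (-D : ℚ) 0 : ℚ) := by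
    rw [show a.im = y * √(-D) by simp [hxy], mul_pow, Real.sq_sqrt']
    push_cast [Rat.cast_max]; ring
  refine ⟨-(y ^ 2 * max (-D : ℚ) 0), ?_⟩
  rw [sq_eq_neg_im_sq hre, him_sq, ofReal_ratCast, Rat.cast_neg]

theorem exists_int_of_add_inv_eq_ratCast {z : ℂ} {n : ℕ} (hn : 0 < n) (hz : z ^ n = 1) {q : ℚ}
    (hq : z + z⁻¹ = q) : ∃ m : ℤ, q = m ∧ |m| ≤ 2 := by
  have hz_inv : z⁻¹ ^ n = 1 := by rw [inv_pow, hz, inv_one]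
  obtain ⟨m, rfl⟩ := Rat.exists_int_eq_of_isIntegral (K := ℂ)
    (hq ▸ (isIntegral_of_pow_eq_one hn hz).add (isIntegral_of_pow_eq_one hn hz_inv))
  refine ⟨m, rfl, ?_⟩
  have := norm_add_inv_le_two (norm_eq_one_of_pow_eq_one hz hn.ne')
  rw [hq] at this
  exact_mod_cast this

end Complex

theorem stmt_1_general (D : ℤ) (lam a : ℂ)
    (hroot : ∃ n : ℕ, 0 < n ∧ lam ^ n = 1)
    (hdeg : (minpoly ℚ lam).natDegree = 4)
    (ha : ∃ x y : ℚ, a = (x : ℂ) + (y : ℂ) * (Real.sqrt (-(D : ℝ)) * Complex.I))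
    (heq : lam ^ 2 - a * lam - 1 = 0) :
    a = Complex.I ∨ a = -Complex.I ∨
      a = (Real.sqrt 2 : ℝ) * Complex.I ∨ a = -((Real.sqrt 2 : ℝ) * Complex.I) := by
  obtain ⟨n, hn, hln⟩ := hroot
  have hnorm : ‖lam‖ = 1 := Complex.norm_eq_one_of_pow_eq_one hln hn.ne'
  have hlam : lam ≠ 0 := norm_ne_zero_iff.mp (by simp [hnorm])
  have ha_eq : a = lam - lam⁻¹ := by field_simp; linear_combination -heq
  obtain ⟨q, hq⟩ :=
    Complex.exists_rat_sq_eq_of_re_eq_zero (ha_eq ▸ Complex.re_sub_inv_eq_zero hnorm) ha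
  have ht : lam ^ 2 + (lam ^ 2)⁻¹ = ((q + 2 : ℚ) : ℂ) := by
    push_cast; rw [← hq, ha_eq]; field_simp; ring
  obtain ⟨m, hm, hm_abs⟩ := Complex.exists_int_of_add_inv_eq_ratCast hn
    (by rw [← pow_mul, mul_comm, pow_mul, hln, one_pow]) ht
  have hquartic : lam ^ 4 - m * lam ^ 2 + 1 = 0 := by
    rw [hm] at ht
    field_simp at ht
    push_cast at ht
    linear_combination ht
  have hq_cases : a ^ 2 = (√2 * Complex.I) ^ 2 ∨ a ^ 2 = Complex.I ^ 2 := by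
    rw [mul_pow, ← Complex.ofReal_pow, Real.sq_sqrt zero_le_two, Complex.I_sq, hq]
    rcases eq_zero_or_one_of_quartic_eq_zero (by omega) hm_abs hquartic with rfl | rfl <;>
      [left; right] <;> norm_num [eq_sub_of_add_eq hm]
  rcases hq_cases with h | h <;> rcases sq_eq_sq_iff_eq_or_eq_neg.mp h with h | h <;> simp [h]

/-- A root of unity `λ` of degree 4 over ℚ with `λ² − aλ − 1 = 0` and
`a ∈ ℚ(√D)` (D a negative integer) forces `a ∈ {±√(−1), ±√(−2)}`. -/
theorem stmt_1 (D : ℤ) (hD : D < 0) (lam a : ℂ)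
    (hroot : ∃ n : ℕ, 0 < n ∧ lam ^ n = 1)
    (hdeg : (minpoly ℚ lam).natDegree = 4)
    (ha : ∃ x y : ℚ, a = (x : ℂ) + (y : ℂ) * (Real.sqrt (-(D : ℝ)) * Complex.I))
    (heq : lam ^ 2 - a * lam - 1 = 0) :
    a = Complex.I ∨ a = -Complex.I ∨
      a = (Real.sqrt 2 : ℝ) * Complex.I ∨ a = -((Real.sqrt 2 : ℝ) * Complex.I) :=
  stmt_1_general D lam a hroot hdeg ha heq
end

section
/- Let λ be a root of unity of algebraic degree 4 over ℚ satisfying λ² − aλ − b = 0, where a, b both lie in ℚ(√(−1)) or both lie in ℚ(√(−3)). If b ∈ {√(−1), −√(−1), (1+√(−3))/2, (1−√(−3))/2}, then a = 0. If b = (−1±√(−3))/2, then no such a exists. -/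
/-!
The minimal polynomial of `λ` is `Φₘ` with `φ(m) = 4`, i.e. `m ∈ {5, 8, 10, 12}`. Multiplying
`λ² - aλ - b` by its complex conjugate `λ² - āλ - b̄` gives a monic quartic vanishing at `λ` with
coefficients `-2 Re a, |a|² - 2 Re b, 2 Re (a b̄), |b|²`. These are rational because on an
imaginary quadratic field complex conjugation is the Galois conjugation, so the quartic is one of
`Φ₅, Φ₈, Φ₁₀, Φ₁₂`. Comparing coefficients for the six values of `b` (all with `Re b ∈ {0, ±1/2}`)
forces `a = 0` when `Re b ∈ {0, 1/2}` and is impossible when `Re b = -1/2`.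
-/

open Polynomial Complex

namespace Polynomial

variable (R : Type*) [CommRing R]

lemma cyclotomic_five : cyclotomic 5 R = X ^ 4 + X ^ 3 + X ^ 2 + X + 1 := by
  have : Fact (Nat.Prime 5) := ⟨by norm_num⟩
  simp [cyclotomic_prime, Finset.sum_range_succ]
  ring

lemma cyclotomic_eight : cyclotomic 8 R = X ^ 4 + 1 := by
  simpa [Finset.sum_range_succ, add_comm] using
    cyclotomic_prime_pow_eq_geom_sum (R := R) (n := 2) Nat.prime_two

lemma cyclotomic_ten : cyclotomic 10 R = X ^ 4 - X ^ 3 + X ^ 2 - X + 1 := by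
  suffices cyclotomic 10 ℤ = X ^ 4 - X ^ 3 + X ^ 2 - X + 1 by
    rw [← map_cyclotomic_int, this]
    simp
  apply mul_right_cancel₀ (cyclotomic_ne_zero 5 ℤ)
  rw [show 10 = 5 * 2 by rfl, ← cyclotomic_expand_eq_cyclotomic_mul Nat.prime_two (by norm_num),
    cyclotomic_five]
  simp
  ring

lemma cyclotomic_twelve : cyclotomic 12 R = X ^ 4 - X ^ 2 + 1 := by
  rw [show 12 = 6 * 2 by rfl, ← cyclotomic_expand_eq_cyclotomic Nat.prime_two (by norm_num)]
  simp
  ring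

end Polynomial

lemma Nat.eq_of_totient_eq_four {m : ℕ} (h : m.totient = 4) :
    m = 5 ∨ m = 8 ∨ m = 10 ∨ m = 12 := by
  have hdvd : m ∣ 120 := by
    rw [Nat.dvd_iff_prime_pow_dvd_dvd]
    intro p k hp hpk
    have hφ : (p ^ k).totient ∣ 4 := h ▸ Nat.totient_dvd_of_dvd hpk
    have hle : p ^ k ≤ 8 := by
      rcases k with _ | j
      · simp
      rw [Nat.totient_prime_pow_succ hp] at hφ
      have hφ_le := Nat.le_of_dvd (by norm_num) hφ
      have hp2 := hp.two_le
      calc p ^ (j + 1) = p ^ j * p := pow_succ _ _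
        _ ≤ p ^ j * (2 * (p - 1)) := Nat.mul_le_mul_left _ (by omega)
        _ ≤ 8 := by rw [mul_left_comm]; omega
    have small : ∀ q < 9, q.totient ∣ 4 → q ∣ 120 := by decide
    exact small _ (by omega) hφ
  have hm : m < 121 := Nat.lt_succ_of_le (Nat.le_of_dvd (by norm_num) hdvd)
  have small : ∀ n < 121, n.totient = 4 → n = 5 ∨ n = 8 ∨ n = 10 ∨ n = 12 := by
    set_option maxRecDepth 4000 in decide
  exact small m hm h

/-- `X⁴ + c₃X³ + c₂X² + c₁X + c₀` is one of `Φ₅, Φ₁₀, Φ₁₂, Φ₈`. -/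
def IsCyclotomicQuartic {R : Type*} [Ring R] (c₃ c₂ c₁ c₀ : R) : Prop :=
  (c₃ = 1 ∧ c₂ = 1 ∧ c₁ = 1 ∧ c₀ = 1) ∨ (c₃ = -1 ∧ c₂ = 1 ∧ c₁ = -1 ∧ c₀ = 1) ∨
    (c₃ = 0 ∧ c₂ = -1 ∧ c₁ = 0 ∧ c₀ = 1) ∨ (c₃ = 0 ∧ c₂ = 0 ∧ c₁ = 0 ∧ c₀ = 1)

section

variable {K : Type*} [Field K] [CharZero K] {lam : K}

lemma minpoly_eq_cyclotomic_of_natDegree_eq_four (hlam : IsOfFinOrder lam)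
    (hdeg : (minpoly ℚ lam).natDegree = 4) :
    ∃ m ∈ ({5, 8, 10, 12} : Finset ℕ), minpoly ℚ lam = cyclotomic m ℚ := by
  have hprim := IsPrimitiveRoot.orderOf lam
  have hcyc := cyclotomic_eq_minpoly_rat hprim hlam.orderOf_pos
  refine ⟨orderOf lam, ?_, hcyc.symm⟩
  have htot : (orderOf lam).totient = 4 := by rw [← natDegree_cyclotomic _ ℚ, hcyc, hdeg]
  simpa using Nat.eq_of_totient_eq_four htot

lemma isCyclotomicQuartic_of_eq_zero (hlam : IsOfFinOrder lam)
    (hdeg : (minpoly ℚ lam).natDegree = 4) {c₃ c₂ c₁ c₀ : ℚ}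
    (h : lam ^ 4 + c₃ * lam ^ 3 + c₂ * lam ^ 2 + c₁ * lam + c₀ = 0) :
    IsCyclotomicQuartic c₃ c₂ c₁ c₀ := by
  have hint : IsIntegral ℚ lam := minpoly.ne_zero_iff.mp fun h0 ↦ by simp [h0] at hdeg
  have hP : X ^ 4 + C c₃ * X ^ 3 + C c₂ * X ^ 2 + C c₁ * X + C c₀ = minpoly ℚ lam := by
    refine eq_of_monic_of_dvd_of_natDegree_le (minpoly.monic hint) (by monicity!)
      (minpoly.dvd ℚ lam ?_) (by rw [hdeg]; compute_degree!)
    simpa using h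
  obtain ⟨m, hm, hmin⟩ := minpoly_eq_cyclotomic_of_natDegree_eq_four hlam hdeg
  rw [hmin] at hP
  have h₃ := congrArg (coeff · 3) hP
  have h₂ := congrArg (coeff · 2) hP
  have h₁ := congrArg (coeff · 1) hP
  have h₀ := congrArg (coeff · 0) hP
  simp only [Finset.mem_insert, Finset.mem_singleton] at hm
  rcases hm with rfl | rfl | rfl | rfl <;>
    simp [cyclotomic_five, cyclotomic_eight, cyclotomic_ten, cyclotomic_twelve, coeff_X,
      coeff_one] at h₃ h₂ h₁ h₀ <;>
    simp [IsCyclotomicQuartic, *]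

end

lemma IsCyclotomicQuartic.map {R S : Type*} [Ring R] [Ring S] (f : R →+* S) {c₃ c₂ c₁ c₀ : R}
    (h : IsCyclotomicQuartic c₃ c₂ c₁ c₀) : IsCyclotomicQuartic (f c₃) (f c₂) (f c₁) (f c₀) := by
  rcases h with ⟨rfl, rfl, rfl, rfl⟩ | ⟨rfl, rfl, rfl, rfl⟩ | ⟨rfl, rfl, rfl, rfl⟩ |
    ⟨rfl, rfl, rfl, rfl⟩ <;> simp [IsCyclotomicQuartic]

lemma quartic_eq_zero_of_quadratic_eq_zero {lam a b : ℂ} (h : lam ^ 2 - a * lam - b = 0) :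
    lam ^ 4 + ↑(-2 * a.re) * lam ^ 3 + ↑(normSq a - 2 * b.re) * lam ^ 2 +
      ↑(2 * (a.re * b.re + a.im * b.im)) * lam + ↑(normSq b) = 0 := by
  rw [← re_add_im a, ← re_add_im b] at h
  push_cast [normSq_apply]
  linear_combination (lam ^ 2 - (a.re - a.im * I) * lam - (b.re - b.im * I)) * h +
    (a.im ^ 2 * lam ^ 2 + 2 * a.im * b.im * lam + b.im ^ 2) * I_sq

lemma isCyclotomicQuartic_of_quadratic {t : ℝ} {e : ℚ} (ht : t ^ 2 = e) {lam a b : ℂ}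
    (hlam : IsOfFinOrder lam) (hdeg : (minpoly ℚ lam).natDegree = 4)
    (heq : lam ^ 2 - a * lam - b = 0)
    (ha : ∃ x y : ℚ, a = x + y * (t * I)) (hb : ∃ x y : ℚ, b = x + y * (t * I)) :
    IsCyclotomicQuartic (-2 * a.re) (normSq a - 2 * b.re) (2 * (a.re * b.re + a.im * b.im))
      (normSq b) := by
  obtain ⟨xa, ya, rfl⟩ := ha
  obtain ⟨xb, yb, rfl⟩ := hb
  have hquartic := quartic_eq_zero_of_quadratic_eq_zero heq
  simp [normSq_apply] at hquartic ⊢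
  have htC : (t : ℂ) ^ 2 = e := by exact_mod_cast ht
  have hrat := isCyclotomicQuartic_of_eq_zero hlam hdeg (c₃ := -2 * xa)
    (c₂ := xa ^ 2 + e * ya ^ 2 - 2 * xb) (c₁ := 2 * (xa * xb + e * ya * yb))
    (c₀ := xb ^ 2 + e * yb ^ 2) (by
      push_cast
      linear_combination hquartic - (ya ^ 2 * lam ^ 2 + 2 * ya * yb * lam + yb ^ 2) * htC)
  convert hrat.map (Rat.castHom ℝ) using 1 <;> simp
  · linear_combination ya ^ 2 * ht
  · linear_combination ya * yb * ht
  · linear_combination yb ^ 2 * ht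

lemma re_ne_neg_half_of_isCyclotomicQuartic {a b : ℂ}
    (h : IsCyclotomicQuartic (-2 * a.re) (normSq a - 2 * b.re)
      (2 * (a.re * b.re + a.im * b.im)) (normSq b)) : b.re ≠ -1 / 2 := by
  intro hb
  simp only [IsCyclotomicQuartic, normSq_apply, hb] at h
  rcases h with ⟨h₃, h₂, -, -⟩ | ⟨h₃, h₂, -, -⟩ | ⟨-, h₂, -, -⟩ | ⟨-, h₂, -, -⟩ <;>
    nlinarith [sq_nonneg a.re, sq_nonneg a.im]

lemma eq_zero_of_isCyclotomicQuartic {a b : ℂ}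
    (h : IsCyclotomicQuartic (-2 * a.re) (normSq a - 2 * b.re)
      (2 * (a.re * b.re + a.im * b.im)) (normSq b)) (hb : b.re = 0 ∨ b.re = 1 / 2) : a = 0 := by
  simp only [IsCyclotomicQuartic, normSq_apply] at h
  apply Complex.ext <;> simp only [zero_re, zero_im] <;>
  rcases hb with hb | hb <;> rw [hb] at h <;>
  rcases h with ⟨h₃, h₂, h₁, h₀⟩ | ⟨h₃, h₂, h₁, h₀⟩ | ⟨h₃, h₂, h₁, h₀⟩ | ⟨h₃, h₂, h₁, h₀⟩ <;>
    nlinarith [sq_nonneg a.re, sq_nonneg a.im, sq_nonneg (a.im * b.im)]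

/-- Let `λ` be a root of unity of degree 4 over ℚ with `λ² − aλ − b = 0`, where
`a, b` both lie in `ℚ(√−1)` or both lie in `ℚ(√−3)`.  If
`b ∈ {±√−1, (1±√−3)/2}` then `a = 0`; if `b = (−1±√−3)/2` then no such `a` exists. -/
theorem stmt_3 (lam a b : ℂ)
    (hroot : ∃ n : ℕ, 0 < n ∧ lam ^ n = 1)
    (hdeg : (minpoly ℚ lam).natDegree = 4)
    (heq : lam ^ 2 - a * lam - b = 0)
    (hfield :
      ((∃ x y : ℚ, a = (x : ℂ) + (y : ℂ) * Complex.I) ∧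
        (∃ x y : ℚ, b = (x : ℂ) + (y : ℂ) * Complex.I)) ∨
      ((∃ x y : ℚ, a = (x : ℂ) + (y : ℂ) * ((Real.sqrt 3 : ℝ) * Complex.I)) ∧
        (∃ x y : ℚ, b = (x : ℂ) + (y : ℂ) * ((Real.sqrt 3 : ℝ) * Complex.I)))) :
    ((b = Complex.I ∨ b = -Complex.I ∨
        b = (1 + (Real.sqrt 3 : ℝ) * Complex.I) / 2 ∨
        b = (1 - (Real.sqrt 3 : ℝ) * Complex.I) / 2) → a = 0) ∧
    ((b = (-1 + (Real.sqrt 3 : ℝ) * Complex.I) / 2 ∨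
        b = (-1 - (Real.sqrt 3 : ℝ) * Complex.I) / 2) → False) := by
  have hlam : IsOfFinOrder lam := isOfFinOrder_iff_pow_eq_one.mpr hroot
  have hc : IsCyclotomicQuartic (-2 * a.re) (normSq a - 2 * b.re)
      (2 * (a.re * b.re + a.im * b.im)) (normSq b) := by
    rcases hfield with ⟨ha, hb⟩ | ⟨ha, hb⟩
    · exact isCyclotomicQuartic_of_quadratic (t := 1) (e := 1) (by norm_num) hlam hdeg heq
        (by simpa using ha) (by simpa using hb)
    · exact isCyclotomicQuartic_of_quadratic (e := 3) (by simp) hlam hdeg heq ha hb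
  constructor
  · rintro (rfl | rfl | rfl | rfl) <;> exact eq_zero_of_isCyclotomicQuartic hc (by norm_num)
  · rintro (rfl | rfl) <;> exact re_ne_neg_half_of_isCyclotomicQuartic hc (by norm_num)
end

section
/- Let D be a negative integer and let λ₁, λ₂ be the roots of an irreducible (over ℚ(√D)) quadratic x² + (a+b√D)x + (c+d√D) = 0 with a,b,c,d ∈ ℚ, and let ζ₁, ζ₂ be the roots of its Galois-conjugate quadratic x² + (a−b√D)x + (c−d√D) = 0. If λ₁ = ζ₁^α ζ₂^β for some integers α, β with |α+β| > 1, then λ₁λ₂ is a root of unity. -/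
/-!
Let `K = ℚ(√D) = {x + y√D}`. The elements `ζ₁ + ζ₂` and `ζ₁ζ₂` lie in `K`, hence so do
`ζ₁^α ζ₂^β + ζ₁^β ζ₂^α` (Newton's recurrence for power sums) and `(ζ₁ζ₂)^(α+β)`. So `λ₁` is a
root of two monic quadratics over `K`; since `λ₁ ∉ K` they coincide, which forces
`λ₂ = ζ₁^β ζ₂^α` and `λ₁λ₂ = (ζ₁ζ₂)^(α+β) = conj(λ₁λ₂)^(α+β)`. Taking absolute values,
`|λ₁λ₂| = 1` because `α + β ≠ 1`, so `conj(λ₁λ₂) = (λ₁λ₂)⁻¹` and `(λ₁λ₂)^(α+β+1) = 1` with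
`α + β + 1 ≠ 0`.
-/

open ComplexConjugate

section SqrtSubfield

variable {E : Type*} [Field E] [CharZero E] {s : E} {q : ℚ}

lemma add_mul_mul_sub_mul_eq_sq_sub (hs : s ^ 2 = q) (x y : ℚ) :
    ((x : E) + y * s) * (x - y * s) = ((x ^ 2 - q * y ^ 2 : ℚ) : E) := by
  push_cast
  linear_combination (-(y : E) ^ 2) * hs

lemma sq_sub_mul_sq_ne_zero (hq : ∀ r : ℚ, r ^ 2 ≠ q) {x y : ℚ} (hxy : x ≠ 0 ∨ y ≠ 0) :
    x ^ 2 - q * y ^ 2 ≠ 0 := by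
  intro h
  by_cases hy : y = 0
  · simp_all
  · exact hq (x / y) (by field_simp; linarith)

def sqrtSubfield (hs : s ^ 2 = q) (hq : ∀ r : ℚ, r ^ 2 ≠ q) : Subfield E where
  carrier := {w | ∃ x y : ℚ, w = x + y * s}
  zero_mem' := ⟨0, 0, by simp⟩
  one_mem' := ⟨1, 0, by simp⟩
  add_mem' := by
    rintro _ _ ⟨x, y, rfl⟩ ⟨u, v, rfl⟩
    exact ⟨x + u, y + v, by push_cast; ring⟩
  neg_mem' := by
    rintro _ ⟨x, y, rfl⟩
    exact ⟨-x, -y, by push_cast; ring⟩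
  mul_mem' := by
    rintro _ _ ⟨x, y, rfl⟩ ⟨u, v, rfl⟩
    refine ⟨x * u + q * y * v, x * v + y * u, ?_⟩
    push_cast
    linear_combination ((y : E) * v) * hs
  inv_mem' := by
    rintro _ ⟨x, y, rfl⟩
    by_cases hxy : x = 0 ∧ y = 0
    · exact ⟨0, 0, by simp [hxy]⟩
    have hN := sq_sub_mul_sq_ne_zero hq (not_and_or.mp hxy)
    refine ⟨x / (x ^ 2 - q * y ^ 2), -y / (x ^ 2 - q * y ^ 2), ?_⟩
    rw [inv_eq_of_mul_eq_one_right (b := ((x : E) - y * s) / ((x ^ 2 - q * y ^ 2 : ℚ) : E))]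
    · push_cast; ring
    · rw [← mul_div_assoc, add_mul_mul_sub_mul_eq_sq_sub hs, div_self (by exact_mod_cast hN)]

end SqrtSubfield

lemma sum_pow_mem {R S : Type*} [CommRing R] [SetLike S R] [SubringClass S R] {T : S}
    {z₁ z₂ : R} (hsum : z₁ + z₂ ∈ T) (hprod : z₁ * z₂ ∈ T) (k : ℕ) : z₁ ^ k + z₂ ^ k ∈ T := by
  induction k using Nat.twoStepInduction with
  | zero => simpa using add_mem (one_mem T) (one_mem T)
  | one => simpa using hsum
  | more k ih₀ ih₁ =>
    have newton : z₁ ^ (k + 2) + z₂ ^ (k + 2) =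
        (z₁ + z₂) * (z₁ ^ (k + 1) + z₂ ^ (k + 1)) - z₁ * z₂ * (z₁ ^ k + z₂ ^ k) := by ring
    rw [newton]
    exact sub_mem (mul_mem hsum ih₁) (mul_mem hprod ih₀)

lemma zpow_mul_zpow_add_zpow_mul_zpow_mem {F S : Type*} [Field F] [SetLike S F]
    [SubfieldClass S F] {T : S} {z₁ z₂ : F} (hz₁ : z₁ ≠ 0) (hz₂ : z₂ ≠ 0)
    (hsum : z₁ + z₂ ∈ T) (hprod : z₁ * z₂ ∈ T) (α β : ℤ) :
    z₁ ^ α * z₂ ^ β + z₁ ^ β * z₂ ^ α ∈ T := by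
  wlog hαβ : α ≤ β generalizing α β
  · simpa only [add_comm] using this β α (le_of_not_ge hαβ)
  obtain ⟨k, rfl⟩ : ∃ k : ℕ, β = α + k := ⟨(β - α).toNat, by omega⟩
  have factor : z₁ ^ α * z₂ ^ (α + k) + z₁ ^ (α + k) * z₂ ^ α
      = (z₁ * z₂) ^ α * (z₁ ^ k + z₂ ^ k) := by
    rw [zpow_add₀ hz₁, zpow_add₀ hz₂, mul_zpow, zpow_natCast, zpow_natCast]
    ring
  rw [factor]
  exact mul_mem (zpow_mem hprod α) (sum_pow_mem hsum hprod k)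

lemma coeffs_eq_of_quadratic_eq_zero_of_notMem {F S : Type*} [Field F] [SetLike S F]
    [SubfieldClass S F] {T : S} {l A B C E : F} (hl : l ∉ T)
    (hA : A ∈ T) (hB : B ∈ T) (hC : C ∈ T) (hE : E ∈ T)
    (h₁ : l ^ 2 + A * l + C = 0) (h₂ : l ^ 2 + B * l + E = 0) : A = B ∧ C = E := by
  have hlin : l * (A - B) = E - C := by linear_combination h₁ - h₂
  have hAB : A = B := by
    by_contra hne
    refine hl ?_
    rw [eq_div_of_mul_eq (sub_ne_zero.mpr hne) hlin]
    exact div_mem (sub_mem hE hC) (sub_mem hA hB)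
  refine ⟨hAB, ?_⟩
  linear_combination hlin - l * sub_eq_zero.mpr hAB

lemma exists_pow_eq_one_of_eq_conj_zpow {w : ℂ} (hw : w ≠ 0) {n : ℤ} (hn : 1 < |n|)
    (h : w = conj w ^ n) : ∃ m : ℕ, 0 < m ∧ w ^ m = 1 := by
  have hnorm : ‖w‖ = 1 := by
    by_contra hne
    have : ‖w‖ ^ (1 : ℤ) = ‖w‖ ^ n := by
      conv_lhs => rw [zpow_one, h]
      rw [norm_zpow, Complex.norm_conj]
    have := zpow_right_injective₀ (norm_pos_iff.mpr hw) hne this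
    rw [← this] at hn
    simp at hn
  have hconj : conj w = w⁻¹ := by
    refine eq_inv_of_mul_eq_one_left ?_
    rw [mul_comm, Complex.mul_conj, Complex.normSq_eq_norm_sq, hnorm]
    norm_num
  have hpow : w ^ (n + 1) = 1 := by
    rw [zpow_add_one₀ hw]
    nth_rewrite 2 [h]
    rw [hconj, inv_zpow, mul_inv_cancel₀ (zpow_ne_zero n hw)]
  refine ⟨(n + 1).natAbs, by rcases lt_abs.mp hn with _ | _ <;> omega, ?_⟩
  rcases Int.natAbs_eq (n + 1) with h' | h'
  · rwa [← zpow_natCast, ← h']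
  · rwa [← zpow_natCast, ← neg_neg ((n + 1).natAbs : ℤ), ← h', zpow_neg, inv_eq_one]

/-- Let `λ₁, λ₂` be the roots of a quadratic `x² + (a+b√D)x + (c+d√D)` that is
irreducible over `ℚ(√D)` (D a negative integer), and let `ζ₁, ζ₂` be the roots
of its Galois conjugate `x² + (a−b√D)x + (c−d√D)`.  If `λ₁ = ζ₁^α ζ₂^β` with
`|α+β| > 1`, then `λ₁λ₂` is a root of unity. -/
theorem stmt_5 (D : ℤ) (hD : D < 0) (a b c d : ℚ) (l1 l2 z1 z2 : ℂ)
    (s : ℂ) (hs : s = (Real.sqrt (-(D : ℝ)) : ℝ) * Complex.I)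
    (hirr : ∀ w : ℂ, (∃ x y : ℚ, w = (x : ℂ) + (y : ℂ) * s) →
      w ^ 2 + ((a : ℂ) + (b : ℂ) * s) * w + ((c : ℂ) + (d : ℂ) * s) ≠ 0)
    (hv1 : l1 + l2 = -((a : ℂ) + (b : ℂ) * s)) (hv2 : l1 * l2 = (c : ℂ) + (d : ℂ) * s)
    (hw1 : z1 + z2 = -((a : ℂ) - (b : ℂ) * s)) (hw2 : z1 * z2 = (c : ℂ) - (d : ℂ) * s)
    (α β : ℤ) (hab : 1 < |α + β|) (hpow : l1 = z1 ^ α * z2 ^ β) :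
    ∃ n : ℕ, 0 < n ∧ (l1 * l2) ^ n = 1 := by
  have hs2 : s ^ 2 = ((D : ℚ) : ℂ) := by
    rw [hs, mul_pow, Complex.I_sq, ← Complex.ofReal_pow,
      Real.sq_sqrt (by exact_mod_cast (neg_pos.mpr hD).le)]
    push_cast; ring
  have hconj (x y : ℚ) : conj ((x : ℂ) + y * s) = x - y * s := by
    simp only [hs, map_add, map_mul, map_ratCast, Complex.conj_ofReal, Complex.conj_I]
    ring
  let K := sqrtSubfield hs2 fun r hr => (sq_nonneg r).not_gt (by rw [hr]; exact_mod_cast hD)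
  have hcd : (c : ℂ) + d * s ≠ 0 := fun h => hirr 0 ⟨0, 0, by simp⟩ (by simp [h])
  have hz : z1 * z2 ≠ 0 := by rw [hw2, ← hconj]; exact (map_ne_zero _).mpr hcd
  have hz1 : z1 ≠ 0 := left_ne_zero_of_mul hz
  have hz2 : z2 ≠ 0 := right_ne_zero_of_mul hz
  have hsum : z1 + z2 ∈ K := ⟨-a, b, by push_cast; linear_combination hw1⟩
  have hprod : z1 * z2 ∈ K := ⟨c, -d, by push_cast; linear_combination hw2⟩
  have hl1 : l1 ∉ K := fun ⟨x, y, h⟩ => hirr l1 ⟨x, y, h⟩ (by linear_combination l1 * hv1 - hv2)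
  -- `l1` is also a root of `X² - (ζ₁^α ζ₂^β + ζ₁^β ζ₂^α) X + (ζ₁ζ₂)^(α+β)`
  have hconst : (c : ℂ) + d * s = (z1 * z2) ^ (α + β) := (coeffs_eq_of_quadratic_eq_zero_of_notMem (T := K) hl1 ⟨a, b, rfl⟩
    (neg_mem (zpow_mul_zpow_add_zpow_mul_zpow_mem hz1 hz2 hsum hprod α β)) ⟨c, d, rfl⟩
    (zpow_mem hprod (α + β)) (by linear_combination l1 * hv1 - hv2)
    (by rw [hpow, mul_zpow, zpow_add₀ hz1, zpow_add₀ hz2]; ring)).2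
  refine exists_pow_eq_one_of_eq_conj_zpow (hv2 ▸ hcd) hab ?_
  rw [hv2, hconj, ← hw2]
  exact hconst
end

section
/- Let g(u₁,u₂) be a nonzero homogeneous polynomial over ℂ satisfying g(λ₁u₁, λ₂u₂) = α·g(u₁,u₂) identically for nonzero α, λ₁, λ₂ ∈ ℂ. If λ₁/λ₂ is a root of unity of order d, then g is a constant multiple of u₁^k u₂^l · ∏_{i=1}^{n} (u₁^d + α_i u₂^d) for some nonnegative integers k, l, n and constants α_i ∈ ℂ, and α = λ₁^{k+dn} λ₂^l. -/
/-!
Dehomogenize: `g` is the degree-`m` homogenization of `q(x) = g(x, 1)`, and the functional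
equation becomes `q(ζ x) = β q(x)` with `ζ = λ₁/λ₂`, `β = α/λ₂^m`. Comparing coefficients,
`ζ^j = β` for every exponent `j` occurring in `q`, so all these exponents are congruent to the
lowest one, `k`, modulo `d = orderOf ζ`; that is, `q = x^k r(x^d)`. Splitting `r` into linear
factors over ℂ and homogenizing back gives the product form, and the top exponent
`deg q = k + d n` gives `α = λ₂^m ζ^(k + d n)`.
-/
namespace Polynomial

theorem natDegree_aeval_X_one_le_totalDegree {R : Type*} [CommSemiring R]
    (g : MvPolynomial (Fin 2) R) :
    (MvPolynomial.aeval (![X, 1] : Fin 2 → R[X]) g).natDegree ≤ g.totalDegree := by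
  conv_lhs => rw [g.as_sum, map_sum]
  refine natDegree_sum_le_of_forall_le _ _ fun s hs => ?_
  rw [MvPolynomial.aeval_monomial, Finsupp.prod_fintype _ _ (by simp), Fin.prod_univ_two]
  simp only [Matrix.cons_val_zero, Matrix.cons_val_one, one_pow, mul_one, algebraMap_eq]
  refine (natDegree_C_mul_X_pow_le _ _).trans ?_
  refine le_trans ?_ (MvPolynomial.le_totalDegree hs)
  simp [Finsupp.sum_fintype, Fin.sum_univ_two]

theorem eval_mul_eq_of_eval_homogenize {K : Type*} [Field K] {q : K[X]} {m : ℕ}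
    (hq : q.natDegree ≤ m) {l1 l2 α : K} (hl2 : l2 ≠ 0)
    (h : ∀ u, MvPolynomial.eval ![l1 * u, l2] (q.homogenize m) =
      α * MvPolynomial.eval ![u, 1] (q.homogenize m)) (u : K) :
    q.eval (l1 / l2 * u) = α / l2 ^ m * q.eval u := by
  have hu := h u
  rw [eval_homogenize hq _ (by simpa), eval_homogenize hq _ (by simp)] at hu
  simp only [Matrix.cons_val_zero, Matrix.cons_val_one, div_one, one_pow, mul_one,
    mul_div_right_comm] at hu
  rw [div_mul_eq_mul_div α, eq_div_iff (pow_ne_zero _ hl2), hu]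

theorem pow_eq_of_mem_support_of_eval_mul {K : Type*} [Field K] [Infinite K] {q : K[X]}
    {ζ β : K} (h : ∀ u, q.eval (ζ * u) = β * q.eval u) {j : ℕ} (hj : j ∈ q.support) :
    ζ ^ j = β := by
  have hcomp : q.comp (C ζ * X) = C β * q := Polynomial.funext fun u => by simp [h]
  have hcoeff := congrArg (coeff · j) hcomp
  simp only [comp_C_mul_X_coeff, coeff_C_mul] at hcoeff
  exact mul_left_cancel₀ (mem_support_iff.mp hj) (hcoeff.trans (mul_comm _ _))

theorem exists_eq_X_pow_mul_expand {R : Type*} [CommSemiring R] {q : R[X]} {k d : ℕ}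
    (hd : d ≠ 0) (h : ∀ j ∈ q.support, k ≤ j ∧ d ∣ j - k) :
    ∃ r, q = X ^ k * expand R d r := by
  obtain ⟨q', rfl⟩ : X ^ k ∣ q := X_pow_dvd_iff.mpr fun j hj =>
    notMem_support_iff.mp fun hmem => (h j hmem).1.not_gt hj
  refine ⟨contract d q', congrArg _ (ext fun i => ?_)⟩
  rw [coeff_expand (Nat.pos_of_ne_zero hd), coeff_contract hd]
  split_ifs with hdi
  · rw [Nat.div_mul_cancel hdi]
  · by_contra hi
    have hmem : i + k ∈ (X ^ k * q').support := by
      rwa [mem_support_iff, coeff_X_pow_mul', if_pos (by omega), Nat.add_sub_cancel]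
    exact hdi (by simpa using (h _ hmem).2)

theorem exists_eq_X_pow_mul_expand_orderOf {K : Type*} [Field K] {q : K[X]} (hq : q ≠ 0)
    {ζ β : K} (hζ : ζ ≠ 0) (hd : orderOf ζ ≠ 0) (h : ∀ j ∈ q.support, ζ ^ j = β) :
    ∃ r, q = X ^ q.natTrailingDegree * expand K (orderOf ζ) r := by
  refine exists_eq_X_pow_mul_expand hd fun j hj =>
    ⟨natTrailingDegree_le_of_mem_supp j hj, orderOf_dvd_of_pow_eq_one ?_⟩
  rw [pow_sub₀ _ hζ (natTrailingDegree_le_of_mem_supp j hj), h j hj,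
    ← h _ (natTrailingDegree_mem_support_of_nonzero hq), mul_inv_cancel₀ (pow_ne_zero _ hζ)]

theorem exists_expand_eq_C_mul_prod {K : Type*} [Field K] [IsAlgClosed K] (d : ℕ) (r : K[X]) :
    ∃ a : Fin r.natDegree → K, expand K d r = C r.leadingCoeff * ∏ i, (X ^ d + C (a i)) := by
  have hlen : r.roots.toList.length = r.natDegree := by
    rw [Multiset.length_toList, IsAlgClosed.card_roots_eq_natDegree]
  refine ⟨fun i => -r.roots.toList[Fin.cast hlen.symm i], ?_⟩
  conv_lhs =>
    rw [← C_leadingCoeff_mul_prod_multiset_X_sub_C (IsAlgClosed.card_roots_eq_natDegree (p := r))]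
  rw [map_mul, expand_C, map_multiset_prod, Multiset.map_map]
  congr 1
  refine Eq.trans ?_ (Fintype.prod_equiv (finCongr hlen)
    (fun j : Fin r.roots.toList.length => X ^ d + C (-r.roots.toList[j.1])) _ fun _ => rfl)
  rw [Fin.prod_univ_fun_getElem r.roots.toList (fun ρ => X ^ d + C (-ρ)),
    ← Multiset.prod_coe, ← Multiset.map_coe, Multiset.coe_toList]
  simp [sub_eq_add_neg]

theorem homogenize_X_pow_add_C {R : Type*} [CommSemiring R] (d : ℕ) (a : R) :
    homogenize (X ^ d + C a) d =
      MvPolynomial.X 0 ^ d + MvPolynomial.C a * MvPolynomial.X 1 ^ d := by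
  simp [homogenize_X_pow le_rfl]

theorem natDegree_X_pow_add_C_le {R : Type*} [Semiring R] (d : ℕ) (a : R) :
    (X ^ d + C a).natDegree ≤ d :=
  (natDegree_add_le _ _).trans (max_le (natDegree_X_pow_le d) (by simp))

theorem homogenize_C_mul_X_pow_mul_prod {R : Type*} [CommSemiring R] (c : R) (k d l : ℕ)
    {n : ℕ} (a : Fin n → R) :
    homogenize (C c * X ^ k * ∏ i, (X ^ d + C (a i))) (k + d * n + l) =
      MvPolynomial.C c * MvPolynomial.X 0 ^ k * MvPolynomial.X 1 ^ l *
        ∏ i, (MvPolynomial.X 0 ^ d + MvPolynomial.C (a i) * MvPolynomial.X 1 ^ d) := by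
  have hdeg : ∀ i ∈ Finset.univ, (X ^ d + C (a i)).natDegree ≤ d := fun i _ =>
    natDegree_X_pow_add_C_le d (a i)
  have hprod := homogenize_finsetProd hdeg
  simp only [Finset.sum_const, Finset.card_univ, Fintype.card_fin, smul_eq_mul,
    homogenize_X_pow_add_C] at hprod
  have hdegprod : (∏ i, (X ^ d + C (a i))).natDegree ≤ n * d :=
    (natDegree_prod_le _ _).trans (by simpa using Finset.sum_le_sum hdeg)
  rw [mul_assoc, homogenize_C_mul, ← mul_one (X ^ k * _), mul_comm d n,
    homogenize_mul _ _ ((natDegree_mul_le).trans (add_le_add (natDegree_X_pow_le k) hdegprod))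
      (natDegree_one.le.trans (Nat.zero_le l)),
    homogenize_mul _ _ (natDegree_X_pow_le k) hdegprod, hprod, homogenize_X_pow le_rfl,
    homogenize_one, Nat.sub_self, pow_zero]
  ring

end Polynomial

open MvPolynomial

theorem stmt_7_general (g : MvPolynomial (Fin 2) ℂ) (m : ℕ) (hg : g.IsHomogeneous m) (hg0 : g ≠ 0)
    (α l1 l2 : ℂ) (hl1 : l1 ≠ 0) (hl2 : l2 ≠ 0)
    (d : ℕ) (hd : 0 < d) (hord : orderOf (l1 / l2) = d)
    (hfe : ∀ u1 u2 : ℂ, eval ![l1 * u1, l2 * u2] g = α * eval ![u1, u2] g) :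
    ∃ (c : ℂ) (k l n : ℕ) (as : Fin n → ℂ),
      g = C c * X 0 ^ k * X 1 ^ l * ∏ i, (X 0 ^ d + C (as i) * X 1 ^ d) ∧
      α = l1 ^ (k + d * n) * l2 ^ l := by
  set q : Polynomial ℂ := aeval ![Polynomial.X, 1] g
  have hgq : q.homogenize m = g := Polynomial.homogenize_eq_of_isHomogeneous hg rfl
  have hq0 : q ≠ 0 := fun hq => hg0 (by rw [← hgq, hq, Polynomial.homogenize_zero])
  obtain ⟨l, hml⟩ : ∃ l, m = q.natDegree + l := Nat.exists_eq_add_of_le <|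
    hg.totalDegree hg0 ▸ Polynomial.natDegree_aeval_X_one_le_totalDegree g
  have hpow : ∀ j ∈ q.support, (l1 / l2) ^ j = α / l2 ^ m := fun j =>
    Polynomial.pow_eq_of_mem_support_of_eval_mul <|
      Polynomial.eval_mul_eq_of_eval_homogenize (by omega) hl2 fun u => by
        simpa [hgq] using hfe u 1
  obtain ⟨r, hr⟩ := hord ▸ Polynomial.exists_eq_X_pow_mul_expand_orderOf hq0
    (div_ne_zero hl1 hl2) (hord ▸ hd.ne') hpow
  obtain ⟨a, ha⟩ := Polynomial.exists_expand_eq_C_mul_prod d r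
  set k := q.natTrailingDegree
  have hdeg : q.natDegree = k + d * r.natDegree := by
    rw [hr, Polynomial.natDegree_mul (pow_ne_zero _ Polynomial.X_ne_zero)
      (right_ne_zero_of_mul (hr ▸ hq0)), Polynomial.natDegree_X_pow,
      Polynomial.natDegree_expand, mul_comm]
  refine ⟨r.leadingCoeff, k, l, r.natDegree, a, ?_, ?_⟩
  · rw [← hgq, hml, hdeg, hr, ha, ← mul_assoc, mul_comm (Polynomial.X ^ k)]
    exact Polynomial.homogenize_C_mul_X_pow_mul_prod _ _ _ _ _
  · have htop := hpow _ (Polynomial.natDegree_mem_support_of_nonzero hq0)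
    rw [hml, hdeg, eq_div_iff (pow_ne_zero _ hl2), div_pow] at htop
    field_simp at htop
    refine mul_left_cancel₀ (pow_ne_zero (k + d * r.natDegree) hl2) ?_
    rw [← htop]
    ring

/-- A nonzero homogeneous polynomial `g(u₁,u₂)` over ℂ with
`g(λ₁u₁, λ₂u₂) = α g(u₁,u₂)` where `λ₁/λ₂` is a root of unity of order `d` is a
constant multiple of `u₁^k u₂^l ∏ᵢ (u₁^d + αᵢ u₂^d)`, and `α = λ₁^{k+dn} λ₂^l`. -/
theorem stmt_7 (g : MvPolynomial (Fin 2) ℂ) (m : ℕ) (hg : g.IsHomogeneous m) (hg0 : g ≠ 0)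
    (α l1 l2 : ℂ) (hα : α ≠ 0) (hl1 : l1 ≠ 0) (hl2 : l2 ≠ 0)
    (d : ℕ) (hd : 0 < d) (hord : orderOf (l1 / l2) = d)
    (hfe : ∀ u1 u2 : ℂ, eval ![l1 * u1, l2 * u2] g = α * eval ![u1, u2] g) :
    ∃ (c : ℂ) (k l n : ℕ) (as : Fin n → ℂ),
      g = C c * X 0 ^ k * X 1 ^ l * ∏ i, (X 0 ^ d + C (as i) * X 1 ^ d) ∧
      α = l1 ^ (k + d * n) * l2 ^ l :=
  stmt_7_general g m hg hg0 α l1 l2 hl1 hl2 d hd hord hfe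
end

section
/- If α, β, γ, δ ∈ K for K an imaginary quadratic field, then the system αγ + β(γ−1) = γ, αδ + βδ = δ−1, γ² + δ(γ−1) = −α+γ, γδ + δ² = −β+δ has no solution; equivalently, there exist no α, β, γ, δ ∈ K satisfying simultaneously α(γ,δ) + β(γ−1,δ) = (γ,δ−1) and γ(γ,δ) + δ(γ−1,δ) = (−α+γ, −β+δ) as vectors in ℂ². -/
/-- No rational number squares to 5. -/
lemma aux_no_rat_sq5 (r : ℚ) (h : r ^ 2 = 5) : False := by
  have h5 : Irrational (Real.sqrt 5) := by
    simpa using (by norm_num : Nat.Prime 5).irrational_sqrt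
  have hr : ((r : ℝ)) ^ 2 = 5 := by exact_mod_cast h
  have : Real.sqrt 5 = |(r : ℝ)| := by
    rw [← hr, Real.sqrt_sq_eq_abs]
  exact h5 ⟨|r|, by rw [this]; push_cast; ring⟩

/-- There are no `α, β, γ, δ` in an imaginary quadratic field `ℚ(√D)` satisfying
`α(γ,δ) + β(γ−1,δ) = (γ,δ−1)` and `γ(γ,δ) + δ(γ−1,δ) = (−α+γ, −β+δ)`. -/
theorem stmt_9 (D : ℤ) (hD : D < 0) (hsf : Squarefree D)
    (α β γ δ : ℂ)
    (hα : ∃ x y : ℚ, α = (x : ℂ) + (y : ℂ) * ((Real.sqrt (-(D : ℝ)) : ℝ) * Complex.I))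
    (hβ : ∃ x y : ℚ, β = (x : ℂ) + (y : ℂ) * ((Real.sqrt (-(D : ℝ)) : ℝ) * Complex.I))
    (hγ : ∃ x y : ℚ, γ = (x : ℂ) + (y : ℂ) * ((Real.sqrt (-(D : ℝ)) : ℝ) * Complex.I))
    (hδ : ∃ x y : ℚ, δ = (x : ℂ) + (y : ℂ) * ((Real.sqrt (-(D : ℝ)) : ℝ) * Complex.I))
    (h1 : α * γ + β * (γ - 1) = γ)
    (h2 : α * δ + β * δ = δ - 1)
    (h3 : γ ^ 2 + δ * (γ - 1) = -α + γ)
    (h4 : γ * δ + δ ^ 2 = -β + δ) : False := by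
  clear hα hβ
  have hDr : (0 : ℝ) < -(D : ℝ) := by
    have : (D : ℝ) < 0 := by exact_mod_cast hD
    linarith
  set r : ℝ := Real.sqrt (-(D : ℝ)) with hr_def
  have hr : 0 < r := Real.sqrt_pos.mpr hDr
  set c : ℂ := (r : ℂ) * Complex.I with hc_def
  have hc2 : c ^ 2 = (D : ℂ) := by
    have hsq : r ^ 2 = -(D : ℝ) := Real.sq_sqrt hDr.le
    have : c ^ 2 = ((r ^ 2 : ℝ) : ℂ) * Complex.I ^ 2 := by
      push_cast [hc_def]; ring
    rw [this, Complex.I_sq, hsq]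
    push_cast; ring
  -- extraction lemma
  have hext : ∀ a b : ℚ, (a : ℂ) + (b : ℂ) * c = 0 → a = 0 ∧ b = 0 := by
    intro a b h
    have h' : ((a : ℝ) : ℂ) + (((b : ℝ) * r : ℝ) : ℂ) * Complex.I = 0 := by
      push_cast [hc_def] at h ⊢; linear_combination h
    have hre := congrArg Complex.re h'
    have him := congrArg Complex.im h'
    simp at hre him
    refine ⟨by exact_mod_cast hre, ?_⟩
    rcases him with him | him
    · exact him
    · exact absurd him (ne_of_gt hr)
  obtain ⟨x1, y1, hg⟩ := hγ
  obtain ⟨x2, y2, hd⟩ := hδ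
  -- eliminate α, β
  have hα2 : α = γ - γ ^ 2 - δ * (γ - 1) := by linear_combination h3
  have hβ2 : β = δ - γ * δ - δ ^ 2 := by linear_combination h4
  subst hα2 hβ2
  -- the master identity
  set S : ℂ := γ + δ with hS_def
  have hf : (S ^ 2 - S - 1) *
      ((2 * S - 1) ^ 4 + 10 * (2 * S - 1) ^ 2 + 5) = 0 := by
    rw [hS_def]
    linear_combination
      (-16 * γ ^ 3 + 32 * γ ^ 2 - 48 * γ ^ 2 * δ - 32 * γ + 96 * γ * δ -
        48 * γ * δ ^ 2 - 48 * δ + 64 * δ ^ 2 - 16 * δ ^ 3) * h1 +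
      (-16 * γ ^ 3 - 32 * γ ^ 2 - 48 * γ ^ 2 * δ + 32 * γ - 32 * γ * δ -
        48 * γ * δ ^ 2 - 16 + 16 * δ - 16 * δ ^ 3) * h2
  set X : ℚ := x1 + x2 with hX_def
  set Y : ℚ := y1 + y2 with hY_def
  have hS : S = (X : ℂ) + (Y : ℂ) * c := by
    rw [hS_def, hg, hd, hX_def, hY_def, hc_def]
    push_cast; ring
  have hDq : (D : ℚ) < 0 := by exact_mod_cast hD
  rcases mul_eq_zero.mp hf with hcase | hcase
  · -- S² - S - 1 = 0
    rw [hS] at hcase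
    have key : ((X ^ 2 + D * Y ^ 2 - X - 1 : ℚ) : ℂ) +
        (((2 * X - 1) * Y : ℚ) : ℂ) * c = 0 := by
      push_cast
      linear_combination hcase - (Y : ℂ) ^ 2 * hc2
    obtain ⟨ha, hb⟩ := hext _ _ key
    rcases mul_eq_zero.mp hb with hb' | hb'
    · -- X = 1/2
      have hX2 : X = 1 / 2 := by linarith
      rw [hX2] at ha
      have hmn : (D : ℚ) * Y ^ 2 ≤ 0 :=
        mul_nonpos_of_nonpos_of_nonneg hDq.le (sq_nonneg Y)
      nlinarith
    · -- Y = 0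
      rw [hb'] at ha
      have h5 : (2 * X - 1) ^ 2 = 5 := by nlinarith
      exact aux_no_rat_sq5 _ h5
  · -- (2S-1)^4 + 10(2S-1)^2 + 5 = 0
    set p : ℚ := (2 * X - 1) ^ 2 + 4 * D * Y ^ 2 with hp_def
    set q : ℚ := 4 * Y * (2 * X - 1) with hq_def
    have hu2 : (2 * S - 1) ^ 2 = (p : ℂ) + (q : ℂ) * c := by
      rw [hS, hp_def, hq_def]
      push_cast
      linear_combination (4 * (Y : ℂ) ^ 2) * hc2
    have hq4 : ((p : ℂ) + (q : ℂ) * c) ^ 2 + 10 * ((p : ℂ) + (q : ℂ) * c) + 5 = 0 := by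
      rw [← hu2]
      linear_combination hcase
    have key : ((p ^ 2 + D * q ^ 2 + 10 * p + 5 : ℚ) : ℂ) +
        ((2 * p * q + 10 * q : ℚ) : ℂ) * c = 0 := by
      push_cast
      linear_combination hq4 - (q : ℂ) ^ 2 * hc2
    obtain ⟨ha, hb⟩ := hext _ _ key
    have hb2 : q * (2 * p + 10) = 0 := by linear_combination hb
    rcases mul_eq_zero.mp hb2 with hb' | hb'
    · -- q = 0, so p² + 10p + 5 = 0
      rw [hb'] at ha
      have h5 : ((p + 5) / 2) ^ 2 = 5 := by nlinarith
      exact aux_no_rat_sq5 _ h5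
    · -- p = -5
      have hp5 : p = -5 := by linarith
      rw [hp5] at ha
      have hmn : (D : ℚ) * q ^ 2 ≤ 0 :=
        mul_nonpos_of_nonpos_of_nonneg hDq.le (sq_nonneg q)
      nlinarith
end

section
/- Let M = [[A₁,A₂],[A₃,A₄]] be a 4×4 rational matrix in 2×2 block form with all blocks A_j invertible, satisfying the 'Type III' conditions: det A₁ = det A₄, det A₂ = det A₃, det A₁ + det A₃ = 1, and (det A₁)·A₁⁻¹A₂ = −(det A₃)·A₃⁻¹A₄. Let N = [[0,B₂],[B₃,0]] be a block anti-diagonal 4×4 rational matrix with det B₂ = det B₃ = 1. Then the product N·M also satisfies the Type III conditions. -/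
open Matrix

/-- A 2×2-block rational matrix `[[C₁,C₂],[C₃,C₄]]` is of Type III if
`det C₁ = det C₄`, `det C₂ = det C₃`, `det C₁ + det C₃ = 1`, and
`(det C₁)C₁⁻¹C₂ = −(det C₃)C₃⁻¹C₄`. -/
def IsTypeIII (C1 C2 C3 C4 : Matrix (Fin 2) (Fin 2) ℚ) : Prop :=
  C1.det = C4.det ∧ C2.det = C3.det ∧ C1.det + C3.det = 1 ∧
    C1.det • (C1⁻¹ * C2) = -(C3.det • (C3⁻¹ * C4))

/-- If `M = [[A₁,A₂],[A₃,A₄]]` is of Type III with all blocks invertible and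
`N = [[0,B₂],[B₃,0]]` is block anti-diagonal with `det B₂ = det B₃ = 1`, then
`N·M = [[B₂A₃, B₂A₄],[B₃A₁, B₃A₂]]` is also of Type III. -/
theorem stmt_11 (A1 A2 A3 A4 B2 B3 : Matrix (Fin 2) (Fin 2) ℚ)
    (h1 : A1.det ≠ 0) (h2 : A2.det ≠ 0) (h3 : A3.det ≠ 0) (h4 : A4.det ≠ 0)
    (hM : IsTypeIII A1 A2 A3 A4)
    (hB2 : B2.det = 1) (hB3 : B3.det = 1) :
    IsTypeIII (B2 * A3) (B2 * A4) (B3 * A1) (B3 * A2) := by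
  obtain ⟨e1, e2, e3, e4⟩ := hM
  have hB2' : IsUnit B2.det := by rw [hB2]; exact isUnit_one
  have hB3' : IsUnit B3.det := by rw [hB3]; exact isUnit_one
  have inv2 : (B2 * A3)⁻¹ = A3⁻¹ * B2⁻¹ := Matrix.mul_inv_rev B2 A3
  have inv3 : (B3 * A1)⁻¹ = A1⁻¹ * B3⁻¹ := Matrix.mul_inv_rev B3 A1
  refine ⟨by simp [Matrix.det_mul, hB2, hB3, e2], by simp [Matrix.det_mul, hB2, hB3, e1], 
    by simp [Matrix.det_mul, hB2, hB3]; linarith, ?_⟩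
  rw [inv2, inv3, Matrix.det_mul, Matrix.det_mul, hB2, hB3, one_mul, one_mul,
    Matrix.mul_assoc, Matrix.mul_assoc, ← Matrix.mul_assoc B2⁻¹,
    ← Matrix.mul_assoc B3⁻¹, Matrix.nonsing_inv_mul _ hB2',
    Matrix.nonsing_inv_mul _ hB3', Matrix.one_mul, Matrix.one_mul]
  rw [eq_comm, neg_eq_iff_eq_neg] at e4
  rw [e4]
end

section
/- Let M = [[A₁,A₂],[A₃,A₄]] be a 4×4 rational matrix in 2×2 blocks with all A_j invertible and the Type III relation A₄ = −(det A₁/det A₂)·A₃A₁⁻¹A₂ (where det A₂ = det A₃ ≠ 0). If M² is block diagonal, then A₁² = (det A₁/det A₂)·A₂A₃, and consequently M² = (1/det A₁)·diag(A₁², A₂⁻¹A₁²A₂). -/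
open Matrix

/-!
Write `c = det A₁ / det A₂`. The top-right block `A₁A₂ - c A₂A₃A₁⁻¹A₂` of `M²` vanishes, so
cancelling `A₂` gives `A₁ = c A₂A₃A₁⁻¹`, i.e. `A₁² = c A₂A₃`. Substituting this into
`A₄² = c² A₃A₁⁻¹A₂A₃A₁⁻¹A₂` gives `A₄² = c A₃A₂ = A₂⁻¹A₁²A₂`. Hence the diagonal blocks of `M²`
are `(c + 1) A₂A₃` and `(c + 1) A₃A₂`, and `c + 1 = c / det A₁` because `det A₁ + det A₂ = 1`.
-/

section

variable {K n : Type*} [Field K] [Fintype n] [DecidableEq n]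

theorem div_add_one_eq_inv_mul_div {a b : K} (ha : a ≠ 0) (hb : b ≠ 0) (hab : a + b = 1) :
    a / b + 1 = a⁻¹ * (a / b) := by
  field_simp
  linear_combination hab

theorem mul_self_eq_smul_mul_of_mul_add_mul_eq_zero {A₁ A₂ A₃ : Matrix n n K}
    (h₁ : IsUnit A₁.det) (h₂ : IsUnit A₂.det) (c : K)
    (h : A₁ * A₂ + A₂ * -(c • (A₃ * A₁⁻¹ * A₂)) = 0) :
    A₁ * A₁ = c • (A₂ * A₃) := by
  have hA₁A₂ : A₁ * A₂ = c • (A₂ * A₃ * A₁⁻¹) * A₂ := by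
    rw [Matrix.mul_neg, ← sub_eq_add_neg, sub_eq_zero] at h
    simpa only [Matrix.mul_smul, Matrix.smul_mul, Matrix.mul_assoc] using h
  have hA₁ : A₁ = c • (A₂ * A₃ * A₁⁻¹) := by
    simpa only [Matrix.mul_nonsing_inv_cancel_right _ _ h₂] using congrArg (· * A₂⁻¹) hA₁A₂
  calc A₁ * A₁ = c • (A₂ * A₃ * A₁⁻¹) * A₁ := by rw [← hA₁]
    _ = c • (A₂ * A₃) := by rw [Matrix.smul_mul, Matrix.nonsing_inv_mul_cancel_right _ _ h₁]

theorem smul_mul_inv_mul_mul_self {A₁ A₂ A₃ : Matrix n n K} (h₁ : IsUnit A₁.det) {c : K}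
    (h : A₁ * A₁ = c • (A₂ * A₃)) :
    c • (A₃ * A₁⁻¹ * A₂) * (c • (A₃ * A₁⁻¹ * A₂)) = c • (A₃ * A₂) := by
  calc c • (A₃ * A₁⁻¹ * A₂) * (c • (A₃ * A₁⁻¹ * A₂))
      = c • (A₃ * (A₁⁻¹ * (c • (A₂ * A₃)) * A₁⁻¹) * A₂) := by
        simp only [Matrix.smul_mul, Matrix.mul_smul, Matrix.mul_assoc]
    _ = c • (A₃ * A₂) := by
        rw [← h, Matrix.nonsing_inv_mul_cancel_left _ _ h₁, ← Matrix.mul_assoc,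
          Matrix.mul_nonsing_inv_cancel_right _ _ h₁]

end

theorem stmt_12_general (A1 A2 A3 A4 : Matrix (Fin 2) (Fin 2) ℚ)
    (h1 : A1.det ≠ 0) (h2 : A2.det ≠ 0) (h23 : A2.det = A3.det)
    (hsum : A1.det + A3.det = 1)
    (h4 : A4 = -((A1.det / A2.det) • (A3 * A1⁻¹ * A2)))
    (hbd1 : A1 * A2 + A2 * A4 = 0) :
    A1 * A1 = (A1.det / A2.det) • (A2 * A3) ∧
    A1 * A1 + A2 * A3 = (A1.det)⁻¹ • (A1 * A1) ∧
    A3 * A2 + A4 * A4 = (A1.det)⁻¹ • (A2⁻¹ * (A1 * A1) * A2) := by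
  set c := A1.det / A2.det
  have hu1 : IsUnit A1.det := h1.isUnit
  have hu2 : IsUnit A2.det := h2.isUnit
  have hc : c + 1 = A1.det⁻¹ * c := div_add_one_eq_inv_mul_div h1 h2 (h23 ▸ hsum)
  have hA1 : A1 * A1 = c • (A2 * A3) :=
    mul_self_eq_smul_mul_of_mul_add_mul_eq_zero hu1 hu2 c (h4 ▸ hbd1)
  have hA4 : A4 * A4 = c • (A3 * A2) := by
    rw [h4, neg_mul_neg, smul_mul_inv_mul_mul_self hu1 hA1]
  have hconj : A2⁻¹ * (A1 * A1) * A2 = c • (A3 * A2) := by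
    rw [hA1, Matrix.mul_smul, Matrix.smul_mul, Matrix.nonsing_inv_mul_cancel_left _ _ hu2]
  refine ⟨hA1, ?_, ?_⟩
  · rw [hA1, smul_smul, ← hc, add_smul, one_smul]
  · rw [hA4, hconj, smul_smul, ← hc, add_smul, one_smul, add_comm]

/-- If `M = [[A₁,A₂],[A₃,A₄]]` is Type III (so `det A₂ = det A₃ ≠ 0`,
`det A₁ + det A₃ = 1`, `A₄ = −(det A₁/det A₂)A₃A₁⁻¹A₂`) and `M²` is block
diagonal, then `A₁² = (det A₁/det A₂)A₂A₃`, and the diagonal blocks of `M²`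
are `(1/det A₁)A₁²` and `(1/det A₁)A₂⁻¹A₁²A₂`. -/
theorem stmt_12 (A1 A2 A3 A4 : Matrix (Fin 2) (Fin 2) ℚ)
    (h1 : A1.det ≠ 0) (h2 : A2.det ≠ 0) (h23 : A2.det = A3.det)
    (hsum : A1.det + A3.det = 1)
    (h4 : A4 = -((A1.det / A2.det) • (A3 * A1⁻¹ * A2)))
    (hbd1 : A1 * A2 + A2 * A4 = 0) (hbd2 : A3 * A1 + A4 * A3 = 0) :
    A1 * A1 = (A1.det / A2.det) • (A2 * A3) ∧
    A1 * A1 + A2 * A3 = (A1.det)⁻¹ • (A1 * A1) ∧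
    A3 * A2 + A4 * A4 = (A1.det)⁻¹ • (A2⁻¹ * (A1 * A1) * A2) :=
  stmt_12_general A1 A2 A3 A4 h1 h2 h23 hsum h4 hbd1
end

section
/- Let a, t ∈ ℚ with a = (t²−t+1)/3. Then the polynomial x⁶ + (1−3a)x³ + a³ factors over ℚ as (x² + x + a)(x² − t x + a)(x² + (t−1)x + a). -/
open Polynomial

/-- For `a = (t²−t+1)/3`, the polynomial `x⁶ + (1−3a)x³ + a³` factors over ℚ as
`(x²+x+a)(x²−tx+a)(x²+(t−1)x+a)`. -/
theorem stmt_13 (t a : ℚ) (ha : a = (t ^ 2 - t + 1) / 3) :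
    (X ^ 6 + C (1 - 3 * a) * X ^ 3 + C (a ^ 3) : ℚ[X]) =
      (X ^ 2 + X + C a) * (X ^ 2 - C t * X + C a) * (X ^ 2 + C (t - 1) * X + C a) := by
  have h3 : (3 : ℚ) * a = t ^ 2 - t + 1 := by rw [ha]; ring
  have hC : (3 : ℚ[X]) * C a = C t ^ 2 - C t + 1 := by
    rw [← C_pow, ← C_sub, ← C_1 (R := ℚ), ← C_add]
    rw [show (3 : ℚ[X]) = C 3 from (map_ofNat C 3).symm, ← C_mul, h3]
  simp only [C_sub, C_mul, C_pow, C_1, map_ofNat C 3]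
  linear_combination (-(C a) * X ^ 2 - X ^ 3 - X ^ 4) * hC
end
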